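/- arXiv:2603.28423 — 2 statements merged into one kernel-verified Lean document; each statement's English description precedes it below -/
import Mathlib

section
/- (Corollary 1) Let G be a simple graph on the finite vertex set V and ν a probability measure on Ω. Then ν satisfies the global Markov property with respect to G if and only if ν satisfies the connected-set Markov property with respect to G. -/
/-!
If `C` separates `A` from `B`, no connected component of the subgraph induced on `D = Cᶜ` meets
both `A` and `B`. Grouping the components of `D` into those meeting `A` and the rest, mutual
conditional independence of the components given `Y_C` yields `Y_A ⊥ Y_B | Y_C`.
Conversely, if `D` is disconnected, `Dᶜ` separates each component `K` from `D \ K`, so the global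
Markov property makes every `Y_K` conditionally independent of all other components jointly,
and independence of each member of a family from the rest already gives mutual independence.
-/

set_option linter.unusedSectionVars false

open MeasureTheory ProbabilityTheory

/-- The map `ω ↦ (Y a ω)_{a ∈ S}`, i.e. the random vector `Y_S`. -/
def restr {Ω : Type*} {V : Type*} {E : V → Type*} (Y : ∀ a, Ω → E a) (S : Set V) :
    Ω → ∀ a : S, E a := fun ω a => Y a ω

lemma measurable_restr {Ω : Type*} [MeasurableSpace Ω] {V : Type*} {E : V → Type*}
    [∀ a, MeasurableSpace (E a)] {Y : ∀ a, Ω → E a} (hY : ∀ a, Measurable (Y a)) (S : Set V) :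
    Measurable (restr Y S) :=
  measurable_pi_lambda _ fun a => hY a

/-- `C` separates `A` from `B` in `G`: every walk in `G` from a vertex of `A` to a vertex of
`B` contains a vertex of `C`. -/
def Separates {V : Type*} (G : SimpleGraph V) (A B C : Set V) : Prop :=
  ∀ a ∈ A, ∀ b ∈ B, ∀ p : G.Walk a b, ∃ c ∈ p.support, c ∈ C

/-- Vertex set of a connected component of the subgraph of `G` induced on `D`. -/
def componentSet {V : Type*} (G : SimpleGraph V) (D : Set V)
    (c : (G.induce D).ConnectedComponent) : Set V :=
  Subtype.val '' {v : D | (G.induce D).connectedComponentMk v = c}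

section Components

open SimpleGraph

variable {V : Type*} {G : SimpleGraph V} {A B D : Set V}

theorem separates_compl_iff :
    Separates G A B Dᶜ ↔ ∀ x : D, x.1 ∈ A → ∀ y : D, y.1 ∈ B → ¬ (G.induce D).Reachable x y := by
  constructor
  · rintro hsep x hx y hy ⟨p⟩
    obtain ⟨c, hc, hcD⟩ := hsep x hx y hy (p.map (Embedding.induce D).toHom)
    have hc' : c ∈ (p.map (Embedding.induce D).toHom).support := hc
    rw [Walk.support_map] at hc'
    obtain ⟨z, -, rfl⟩ := List.mem_map.mp hc'
    exact hcD z.2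
  · intro h a ha b hb p
    by_contra! hp
    exact h _ ha _ hb ⟨p.induce D fun c hc => not_not.mp (hp c hc)⟩

theorem mem_componentSet_iff {c : (G.induce D).ConnectedComponent} {x : V} :
    x ∈ componentSet G D c ↔ ∃ h : x ∈ D, (G.induce D).connectedComponentMk ⟨x, h⟩ = c := by
  simp [componentSet]

theorem mem_componentSet_connectedComponentMk (x : D) :
    x.1 ∈ componentSet G D ((G.induce D).connectedComponentMk x) :=
  ⟨x, rfl, rfl⟩

theorem componentSet_subset (c : (G.induce D).ConnectedComponent) : componentSet G D c ⊆ D :=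
  Set.image_subset_range _ _ |>.trans Subtype.range_coe.le

theorem componentSet_nonempty (c : (G.induce D).ConnectedComponent) :
    (componentSet G D c).Nonempty := by
  induction c using ConnectedComponent.ind with
  | h v => exact ⟨v, mem_componentSet_connectedComponentMk v⟩

theorem disjoint_componentSet {c c' : (G.induce D).ConnectedComponent} (h : c ≠ c') :
    Disjoint (componentSet G D c) (componentSet G D c') := by
  refine Set.disjoint_left.mpr fun x hx hx' => h ?_
  obtain ⟨_, rfl⟩ := mem_componentSet_iff.mp hx
  obtain ⟨_, rfl⟩ := mem_componentSet_iff.mp hx'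
  rfl

theorem separates_componentSet (c : (G.induce D).ConnectedComponent) :
    Separates G (componentSet G D c) (D \ componentSet G D c) Dᶜ := by
  refine separates_compl_iff.mpr fun x hx y hy hxy => hy.2 ?_
  obtain ⟨_, rfl⟩ := mem_componentSet_iff.mp hx
  rw [ConnectedComponent.sound hxy]
  exact mem_componentSet_connectedComponentMk y

theorem diff_componentSet_nonempty (hD : D.Nonempty) (hconn : ¬ (G.induce D).Connected)
    (c : (G.induce D).ConnectedComponent) : (D \ componentSet G D c).Nonempty := by
  by_contra! h
  have hc (x : D) : (G.induce D).connectedComponentMk x = c := by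
    obtain ⟨_, hx⟩ := mem_componentSet_iff.mp (Set.sdiff_eq_empty.mp h x.2)
    exact hx
  have : Nonempty D := hD.to_subtype
  exact hconn ⟨fun x y => ConnectedComponent.exact ((hc x).trans (hc y).symm)⟩

theorem Separates.not_connected_induce (hsep : Separates G A B Dᶜ) (hAD : A ⊆ D) (hBD : B ⊆ D)
    (hA : A.Nonempty) (hB : B.Nonempty) : ¬ (G.induce D).Connected := fun hconn => by
  obtain ⟨a, ha⟩ := hA
  obtain ⟨b, hb⟩ := hB
  exact separates_compl_iff.mp hsep ⟨a, hAD ha⟩ ha ⟨b, hBD hb⟩ hb (hconn.preconnected _ _)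

theorem subset_biUnion_componentSet (hAD : A ⊆ D) :
    A ⊆ ⋃ c ∈ {c | (componentSet G D c ∩ A).Nonempty}, componentSet G D c := by
  intro a ha
  have ha' := mem_componentSet_connectedComponentMk (G := G) ⟨a, hAD ha⟩
  exact Set.mem_biUnion ⟨a, ha', ha⟩ ha'

theorem Separates.subset_biUnion_componentSet_compl (hsep : Separates G A B Dᶜ) (hBD : B ⊆ D) :
    B ⊆ ⋃ c ∈ {c | (componentSet G D c ∩ A).Nonempty}ᶜ, componentSet G D c := by
  intro b hb
  have hb' := mem_componentSet_connectedComponentMk (G := G) ⟨b, hBD hb⟩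
  refine Set.mem_biUnion (fun ⟨a, ha, haA⟩ => ?_) hb'
  obtain ⟨haD, hab⟩ := mem_componentSet_iff.mp ha
  exact separates_compl_iff.mp hsep ⟨a, haD⟩ haA ⟨b, hBD hb⟩ hb (ConnectedComponent.exact hab)

end Components

section RestrictedVectors

variable {Ω V : Type*} {E : V → Type*} [∀ a, MeasurableSpace (E a)]
  {Y : ∀ a, Ω → E a}

theorem comap_restr_eq_iSup (S : Set V) :
    MeasurableSpace.comap (restr Y S) MeasurableSpace.pi =
      ⨆ a : S, MeasurableSpace.comap (Y a) inferInstance := by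
  simp only [MeasurableSpace.pi, MeasurableSpace.comap_iSup, MeasurableSpace.comap_comp]
  rfl

theorem comap_restr_le_iff {S : Set V} {m : MeasurableSpace Ω} :
    MeasurableSpace.comap (restr Y S) MeasurableSpace.pi ≤ m ↔
      ∀ a ∈ S, MeasurableSpace.comap (Y a) inferInstance ≤ m := by
  simp [comap_restr_eq_iSup]

theorem comap_le_comap_restr {S : Set V} {a : V} (ha : a ∈ S) :
    MeasurableSpace.comap (Y a) inferInstance ≤
      MeasurableSpace.comap (restr Y S) MeasurableSpace.pi := by
  rw [comap_restr_eq_iSup]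
  exact le_iSup_of_le ⟨a, ha⟩ le_rfl

theorem comap_restr_mono {S T : Set V} (h : S ⊆ T) :
    MeasurableSpace.comap (restr Y S) MeasurableSpace.pi ≤
      MeasurableSpace.comap (restr Y T) MeasurableSpace.pi :=
  comap_restr_le_iff.mpr fun _ ha => comap_le_comap_restr (h ha)

theorem comap_restr_le_biSup {ι : Type*} {K : ι → Set V} {I : Set ι} {S : Set V}
    (h : S ⊆ ⋃ i ∈ I, K i) :
    MeasurableSpace.comap (restr Y S) MeasurableSpace.pi ≤
      ⨆ i ∈ I, MeasurableSpace.comap (restr Y (K i)) MeasurableSpace.pi := by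
  refine comap_restr_le_iff.mpr fun a ha => ?_
  obtain ⟨i, hi, hai⟩ := Set.mem_iUnion₂.mp (h ha)
  exact (comap_le_comap_restr hai).trans
    (le_iSup₂ (f := fun i (_ : i ∈ I) => MeasurableSpace.comap (restr Y (K i)) _) i hi)

end RestrictedVectors

theorem ProbabilityTheory.Kernel.iIndep_of_forall_indep_iSup_ne {α Ω ι : Type*}
    {_ : MeasurableSpace α} {_ : MeasurableSpace Ω} {m : ι → MeasurableSpace Ω}
    {κ : Kernel α Ω} [IsMarkovKernel κ] {μ : Measure α}
    (h : ∀ i, Indep (m i) (⨆ (j) (_ : j ≠ i), m j) κ μ) : iIndep m κ μ := by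
  classical
  intro s
  induction s using Finset.induction_on with
  | empty => intro f _; simp
  | insert i s his ih =>
    intro f hf
    have hrest : MeasurableSet[⨆ (j) (_ : j ≠ i), m j] (⋂ j ∈ s, f j) :=
      .biInter s.countable_toSet fun j hj =>
        le_iSup₂ (f := fun j (_ : j ≠ i) => m j) j (ne_of_mem_of_not_mem hj his) _
          (hf j (Finset.mem_insert_of_mem hj))
    filter_upwards [h i _ _ (hf i (Finset.mem_insert_self i s)) hrest,
      ih fun j hj => hf j (Finset.mem_insert_of_mem hj)] with a hi hs
    rw [Finset.set_biInter_insert, Finset.prod_insert his, hi, hs]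

section MarkovProperties

variable {Ω : Type*} [MeasurableSpace Ω] [StandardBorelSpace Ω] [Nonempty Ω]
  {V : Type*} [Fintype V]
  {E : V → Type*} [∀ a, MeasurableSpace (E a)] [∀ a, StandardBorelSpace (E a)]

/-- The global Markov property of `ν` with respect to the simple graph `G`. -/
def GMP (Y : ∀ a, Ω → E a) (hY : ∀ a, Measurable (Y a)) (ν : Measure Ω) [IsFiniteMeasure ν]
    (G : SimpleGraph V) : Prop :=
  ∀ (A B C : Set V), A.Nonempty → B.Nonempty →
    Disjoint A B → Disjoint A C → Disjoint B C →
    Separates G A B C →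
    CondIndepFun (MeasurableSpace.comap (restr Y C) MeasurableSpace.pi)
      ((measurable_restr hY C).comap_le) (restr Y A) (restr Y B) ν

/-- The connected-set Markov property of `ν` with respect to the simple graph `G`. -/
def CSMP (Y : ∀ a, Ω → E a) (hY : ∀ a, Measurable (Y a)) (ν : Measure Ω) [IsFiniteMeasure ν]
    (G : SimpleGraph V) : Prop :=
  ∀ (D : Set V), D.Nonempty → ¬ (G.induce D).Connected →
    iCondIndepFun (MeasurableSpace.comap (restr Y Dᶜ) MeasurableSpace.pi)
      ((measurable_restr hY Dᶜ).comap_le)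
      (m := fun _ => MeasurableSpace.pi)
      (fun c : (G.induce D).ConnectedComponent => restr Y (componentSet G D c)) ν

/-- **Corollary 1.** A probability measure `ν` satisfies the global Markov
property with respect to a simple graph `G` if and only if it satisfies the connected-set
Markov property with respect to `G`. -/
theorem GMP_iff_CSMP (Y : ∀ a, Ω → E a) (hY : ∀ a, Measurable (Y a))
    (ν : Measure Ω) [IsProbabilityMeasure ν] (G : SimpleGraph V) :
    GMP Y hY ν G ↔ CSMP Y hY ν G := by
  constructor
  · intro hGMP D hD hconn
    rw [iCondIndepFun_iff_iCondIndep]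
    refine Kernel.iIndep_of_forall_indep_iSup_ne fun c => ?_
    have hsep := hGMP (componentSet G D c) (D \ componentSet G D c) Dᶜ
      (componentSet_nonempty c) (diff_componentSet_nonempty hD hconn c) Set.disjoint_sdiff_right
      (disjoint_compl_right.mono_left (componentSet_subset c))
      (disjoint_compl_right.mono_left Set.sdiff_subset) (separates_componentSet c)
    rw [condIndepFun_iff_condIndep] at hsep
    refine condIndep_of_condIndep_of_le_right hsep (iSup₂_le fun c' hc' => comap_restr_mono ?_)
    exact Set.subset_sdiff.mpr ⟨componentSet_subset c', disjoint_componentSet hc'⟩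
  · intro hCSMP A B C hA hB _ hAC hBC hsep
    obtain ⟨D, rfl⟩ : ∃ D, C = Dᶜ := ⟨Cᶜ, (compl_compl C).symm⟩
    have hAD : A ⊆ D := Set.disjoint_compl_right_iff_subset.mp hAC
    have hBD : B ⊆ D := Set.disjoint_compl_right_iff_subset.mp hBC
    have hI := hCSMP D (hA.mono hAD) (hsep.not_connected_induce hAD hBD hA hB)
    rw [iCondIndepFun_iff_iCondIndep] at hI
    have hsplit := condIndep_iSup_of_disjoint (fun c => (measurable_restr hY _).comap_le) hI
      (disjoint_compl_right (a := {c | (componentSet G D c ∩ A).Nonempty}))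
    rw [condIndepFun_iff_condIndep]
    exact condIndep_of_condIndep_of_le_left
      (condIndep_of_condIndep_of_le_right hsplit
        (comap_restr_le_biSup (hsep.subset_biUnion_componentSet_compl hBD)))
      (comap_restr_le_biSup (subset_biUnion_componentSet hAD))

end MarkovProperties
end

section
/- Let D ⊆ V and let K_1, …, K_r be a partition of D into nonempty pairwise disjoint sets. If for every x ∈ 𝒳 the random vectors Y_{K_1}, …, Y_{K_r} are mutually conditionally independent given Y_{V∖D} under the conditional measure μ_x = μ(· | X = x), then under μ the random vectors Y_{K_1}, …, Y_{K_r} are mutually conditionally independent given the pair (Y_{V∖D}, X). -/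
/-!
A set in `σ(Z, X)` with `X` finite-valued meets each fibre `{X = x}` in the trace of a set in
`σ(Z)`. Hence, on `{X = x}`, the conditional expectation given `(Z, X)` under `μ` agrees with the
conditional expectation given `Z` under `μ(· | X = x)`, and the product formula for indicators
that characterizes conditional independence transfers fibre by fibre, with `Z = Y_{V∖D}`.
-/

open MeasureTheory ProbabilityTheory

instance cond_isFiniteMeasure {Ω : Type*} [MeasurableSpace Ω] (μ : Measure Ω) (s : Set Ω) :
    IsFiniteMeasure (μ[|s]) := by
  constructor
  unfold ProbabilityTheory.cond
  simp only [Measure.smul_apply, smul_eq_mul, Measure.restrict_apply_univ]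
  exact lt_of_le_of_lt (ENNReal.inv_mul_le_one _) ENNReal.one_lt_top

theorem Measurable.apply_of_countable {α β γ : Type*} {m : MeasurableSpace α} [MeasurableSpace β]
    [MeasurableSpace γ] [Countable β] [MeasurableSingletonClass β] {X : α → β} (hX : Measurable X)
    {h : β → α → γ} (hh : ∀ b, Measurable (h b)) : Measurable fun a => h (X a) a :=
  (measurable_from_prod_countable_left (f := fun p : α × β => h p.2 p.1) hh).comp
    (measurable_id.prodMk hX)

theorem MeasureTheory.Integrable.cond {Ω E : Type*} {mΩ : MeasurableSpace Ω}
    [NormedAddCommGroup E] {μ : Measure Ω} {f : Ω → E} (hf : Integrable f μ) (s : Set Ω) :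
    Integrable f μ[|s] := by
  by_cases hs : μ s = 0
  · simp [cond_eq_zero_of_meas_eq_zero hs]
  · exact hf.restrict.smul_measure (ENNReal.inv_ne_top.2 hs)

namespace ProbabilityTheory

variable {Ω 𝒳 F ι : Type*} {mΩ : MeasurableSpace Ω} [MeasurableSpace 𝒳]
  [MeasurableSingletonClass 𝒳] {X : Ω → 𝒳} {Z : Ω → F}

theorem preimage_prodMk_ae_eq_cond_fiber (hX : Measurable X) (μ : Measure Ω) (u : Set (F × 𝒳))
    (x : 𝒳) :
    (fun ω => (Z ω, X ω)) ⁻¹' u =ᵐ[μ[|X ← x]] Z ⁻¹' ((fun z => (z, x)) ⁻¹' u) := by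
  filter_upwards [ae_cond_mem (hX (measurableSet_singleton x))] with ω hω
  subst hω
  rfl

variable [Fintype 𝒳]

theorem ae_of_forall_ae_cond_fiber (hX : Measurable X) (μ : Measure Ω) [IsFiniteMeasure μ]
    {p : Ω → Prop} (h : ∀ x, ∀ᵐ ω ∂μ[|X ← x], p ω) : ∀ᵐ ω ∂μ, p ω := by
  rw [← sum_meas_smul_cond_fiber hX μ, ae_iff]
  simp [ae_iff.1 (h _)]

theorem integral_eq_sum_cond_fiber {E : Type*} [NormedAddCommGroup E] [NormedSpace ℝ E]
    (hX : Measurable X) (μ : Measure Ω) [IsFiniteMeasure μ] {f : Ω → E} (hf : Integrable f μ) :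
    ∫ ω, f ω ∂μ = ∑ x, (μ (X ⁻¹' {x})).toReal • ∫ ω, f ω ∂μ[|X ← x] := by
  conv_lhs => rw [← sum_meas_smul_cond_fiber hX μ]
  rw [← sum_meas_smul_cond_fiber hX μ] at hf
  simp only [integral_finsetSum_measure (integrable_finsetSum_measure.1 hf), integral_smul_measure]

variable [mF : MeasurableSpace F]

theorem condExp_comap_prodMk_ae_eq (hZ : Measurable Z) (hX : Measurable X) (μ : Measure Ω)
    [IsFiniteMeasure μ] {f : Ω → ℝ} (hf : Integrable f μ) :
    μ[f|MeasurableSpace.comap (fun ω => (Z ω, X ω)) inferInstance]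
      =ᵐ[μ] fun ω => (μ[|X ← X ω])[f|mF.comap Z] ω := by
  set g : Ω → ℝ := fun ω => (μ[|X ← X ω])[f|mF.comap Z] ω
  have hZX : MeasurableSpace.comap (fun ω => (Z ω, X ω)) inferInstance ≤ mΩ :=
    (hZ.prodMk hX).comap_le
  have hZ_le : mF.comap Z ≤ MeasurableSpace.comap (fun ω => (Z ω, X ω)) inferInstance := by
    rintro s ⟨t, ht, rfl⟩
    exact ⟨Prod.fst ⁻¹' t, measurable_fst ht, rfl⟩
  have hg_fiber : ∀ x, g =ᵐ[μ[|X ← x]] (μ[|X ← x])[f|mF.comap Z] := fun x => by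
    filter_upwards [ae_cond_mem (hX (measurableSet_singleton x))] with ω hω
    subst hω
    rfl
  have hg_int : Integrable g μ := by
    rw [← sum_meas_smul_cond_fiber hX μ]
    exact integrable_finsetSum_measure.2 fun x _ =>
      (integrable_condExp.congr (hg_fiber x).symm).smul_measure (measure_ne_top _ _)
  have hg_meas :
      StronglyMeasurable[MeasurableSpace.comap (fun ω => (Z ω, X ω)) inferInstance] g :=
    (Measurable.apply_of_countable (h := fun x => (μ[|X ← x])[f|mF.comap Z])
      (Measurable.of_comap_le le_rfl).snd
      fun x => stronglyMeasurable_condExp.measurable.mono hZ_le le_rfl).stronglyMeasurable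
  refine (ae_eq_condExp_of_forall_setIntegral_eq hZX hf (fun s _ _ => hg_int.integrableOn) ?_
    hg_meas.aestronglyMeasurable).symm
  rintro s ⟨u, hu, rfl⟩ -
  have hs := hZX _ ⟨u, hu, rfl⟩
  rw [← integral_indicator hs, ← integral_indicator hs, integral_eq_sum_cond_fiber hX μ
    (hg_int.indicator hs), integral_eq_sum_cond_fiber hX μ (hf.indicator hs)]
  refine Finset.sum_congr rfl fun x _ => ?_
  have hslice : MeasurableSet[mF.comap Z] (Z ⁻¹' ((fun z => (z, x)) ⁻¹' u)) :=
    ⟨_, measurable_prodMk_right hu, rfl⟩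
  simp only [integral_indicator hs]
  rw [setIntegral_congr_set (preimage_prodMk_ae_eq_cond_fiber hX _ u x),
    setIntegral_congr_set (preimage_prodMk_ae_eq_cond_fiber hX _ u x),
    setIntegral_congr_ae (hZ.comap_le _ hslice) ((hg_fiber x).mono fun _ h _ => h),
    setIntegral_condExp hZ.comap_le (hf.cond _) hslice]

theorem iCondIndepFun_comap_prodMk_of_forall_cond_fiber [StandardBorelSpace Ω] (hZ : Measurable Z)
    (hX : Measurable X) (μ : Measure Ω) [IsFiniteMeasure μ] {β : ι → Type*}
    {mβ : ∀ i, MeasurableSpace (β i)} {f : ∀ i, Ω → β i} (hf : ∀ i, Measurable (f i))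
    (h : ∀ x, iCondIndepFun (mF.comap Z) hZ.comap_le f μ[|X ← x]) :
    iCondIndepFun (MeasurableSpace.comap (fun ω => (Z ω, X ω)) inferInstance)
      (hZ.prodMk hX).comap_le f μ := by
  rw [iCondIndepFun_iff _ _ _ _ hf]
  intro s g hg
  have hmeas : ∀ i ∈ s, MeasurableSet (g i) := fun i hi => (hf i).comap_le _ (hg i hi)
  have hcond (A : Set Ω) (hA : MeasurableSet A) :=
    condExp_comap_prodMk_ae_eq hZ hX μ ((integrable_const (1 : ℝ)).indicator hA)
  have hprod_fiber : ∀ᵐ ω ∂μ, ((μ[|X ← X ω])⟦⋂ i ∈ s, g i|mF.comap Z⟧) ω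
      = ∏ i ∈ s, ((μ[|X ← X ω])⟦g i|mF.comap Z⟧) ω := by
    refine ae_of_forall_ae_cond_fiber hX μ fun x => ?_
    filter_upwards [(iCondIndepFun_iff _ _ _ _ hf _).1 (h x) s hg,
      ae_cond_mem (hX (measurableSet_singleton x))] with ω hω hωx
    subst hωx
    simpa only [Finset.prod_apply] using hω
  filter_upwards [hcond _ (Finset.measurableSet_biInter s hmeas), hprod_fiber,
    (Filter.eventually_all_finset s).2 fun i hi => hcond _ (hmeas i hi)]
    with ω hinter hprod hfactors
  rw [hinter, hprod, Finset.prod_apply]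
  exact Finset.prod_congr rfl fun i hi => (hfactors i hi).symm

end ProbabilityTheory

theorem profile_iCondIndep_implies_iCondIndep_given_YDc_X_general
    {Ω : Type*} [MeasurableSpace Ω] [StandardBorelSpace Ω]
    {V : Type*}
    {𝒳 : Type*} [Fintype 𝒳] [MeasurableSpace 𝒳] [MeasurableSingletonClass 𝒳]
    {E : V → Type*} [∀ a, MeasurableSpace (E a)]
    (Y : ∀ a, Ω → E a) (hY : ∀ a, Measurable (Y a))
    (X : Ω → 𝒳) (hX : Measurable X)
    (μ : Measure Ω) [IsProbabilityMeasure μ]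
    (D : Set V) (r : ℕ) (K : Fin r → Set V)
    (h : ∀ x : 𝒳,
      iCondIndepFun (MeasurableSpace.comap (restr Y Dᶜ) MeasurableSpace.pi)
        ((measurable_restr hY Dᶜ).comap_le)
        (m := fun _ => MeasurableSpace.pi)
        (fun i : Fin r => restr Y (K i)) (μ[|X ⁻¹' {x}])) :
    iCondIndepFun
      (MeasurableSpace.comap (fun ω => (restr Y Dᶜ ω, X ω)) inferInstance)
      (((measurable_restr hY Dᶜ).prodMk hX).comap_le)
      (m := fun _ => MeasurableSpace.pi)
      (fun i : Fin r => restr Y (K i)) μ :=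
  iCondIndepFun_comap_prodMk_of_forall_cond_fiber (measurable_restr hY Dᶜ) hX μ
    (fun i => measurable_restr hY (K i)) h

/-- Let `K_1, …, K_r` be a partition of `D ⊆ V` into nonempty pairwise
disjoint sets. If for every `x ∈ 𝒳` the random vectors `Y_{K_1}, …, Y_{K_r}` are mutually
conditionally independent given `Y_{V∖D}` under `μ_x = μ(·|X = x)`, then under `μ` they are
mutually conditionally independent given the pair `(Y_{V∖D}, X)`. -/
theorem profile_iCondIndep_implies_iCondIndep_given_YDc_X
    {Ω : Type*} [MeasurableSpace Ω] [StandardBorelSpace Ω] [Nonempty Ω]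
    {V : Type*} [Fintype V]
    {𝒳 : Type*} [Fintype 𝒳] [Nonempty 𝒳] [MeasurableSpace 𝒳] [MeasurableSingletonClass 𝒳]
    {E : V → Type*} [∀ a, MeasurableSpace (E a)] [∀ a, StandardBorelSpace (E a)]
    (Y : ∀ a, Ω → E a) (hY : ∀ a, Measurable (Y a))
    (X : Ω → 𝒳) (hX : Measurable X)
    (μ : Measure Ω) [IsProbabilityMeasure μ] (hXpos : ∀ x : 𝒳, μ (X ⁻¹' {x}) ≠ 0)
    (D : Set V) (r : ℕ) (K : Fin r → Set V)
    (hKne : ∀ i, (K i).Nonempty)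
    (hKdisj : Pairwise (Function.onFun Disjoint K))
    (hKunion : (⋃ i, K i) = D)
    (h : ∀ x : 𝒳,
      iCondIndepFun (MeasurableSpace.comap (restr Y Dᶜ) MeasurableSpace.pi)
        ((measurable_restr hY Dᶜ).comap_le)
        (m := fun _ => MeasurableSpace.pi)
        (fun i : Fin r => restr Y (K i)) (μ[|X ⁻¹' {x}])) :
    iCondIndepFun
      (MeasurableSpace.comap (fun ω => (restr Y Dᶜ ω, X ω)) inferInstance)
      (((measurable_restr hY Dᶜ).prodMk hX).comap_le)
      (m := fun _ => MeasurableSpace.pi)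
      (fun i : Fin r => restr Y (K i)) μ :=
  profile_iCondIndep_implies_iCondIndep_given_YDc_X_general Y hY X hX μ D r K h
end
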